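/- arXiv:1704.02595 — 2 statements merged into one kernel-verified Lean document; each statement's English description precedes it below -/
import Mathlib

section
/- Let Γ be a finitely generated group and Z ⊆ Sub(Γ) a sofic uniformly recurrent subgroup. Then there exists a Γ-invariant Borel probability measure on Z (with respect to the conjugation action), i.e., Z carries an invariant random subgroup. -/
/-!
Take a sofic approximation of `Z` at radius `k` with error `1/(k+1)` and label each vertex `p` by
a subgroup `H_p ∈ Z` such that the `k`-ball around `p` looks like the `k`-ball around the base
coset of `Γ/H_p` (an arbitrary element of `Z` when `p` is not a `(Z,k)`-vertex). The empirical
measures `μ_k = avg_p δ_{H_p}` live on `Z`. A clopen `C ⊆ Sub(Γ)` only depends on finitely many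
elements of `Γ`, so for `g = κ(u)` and `k` large the relabelling `p ↦ u • p` matches
`{p | H_p ∈ g⁻¹ • C}` with `{p | H_p ∈ C}` up to the bad vertices: `μ_k(g⁻¹ • C) - μ_k(C) → 0`.
A weak limit point `μ` of `(μ_k)` (the space of probability measures on the compact space
`Sub(Γ)` is compact) is then carried by the closed set `Z`, and, clopen sets having empty
frontier, `μ(g⁻¹ • C) = μ(C)` for all clopen `C`. As `Γ` is countable, clopen sets form a
π-system generating the Borel σ-algebra, so `μ` is invariant.
-/

open MeasureTheory

/-- Conjugation action of a group on its subgroups: `g • H = gHg⁻¹`. -/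
def conjSub {Γ : Type*} [Group Γ] (g : Γ) (H : Subgroup Γ) : Subgroup Γ :=
  Subgroup.map (MulAut.conj g).toMonoidHom H

/-- The Chabauty-type topology on `Sub(Γ)`: the topology induced from the product
topology on `{0,1}^Γ` via `H ↦ (γ ↦ decide (γ ∈ H))`. -/
noncomputable instance chabauty {Γ : Type*} [Group Γ] : TopologicalSpace (Subgroup Γ) :=
  TopologicalSpace.induced
    (fun H (g : Γ) => @decide (g ∈ H) (Classical.dec _)) inferInstance

/-- The Borel σ-algebra on `Sub(Γ)`. -/
noncomputable instance {Γ : Type*} [Group Γ] : MeasurableSpace (Subgroup Γ) :=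
  borel (Subgroup Γ)

/-- A uniformly recurrent subgroup: a nonempty, closed, conjugation-invariant subset of
`Sub(Γ)` on which every conjugation orbit is dense. -/
structure IsURS {Γ : Type*} [Group Γ] (Z : Set (Subgroup Γ)) : Prop where
  nonempty : Z.Nonempty
  closed : IsClosed Z
  invariant : ∀ g : Γ, ∀ H ∈ Z, conjSub g H ∈ Z
  minimal : ∀ H ∈ Z, ∀ K ∈ Z, K ∈ closure {L : Subgroup Γ | ∃ g : Γ, conjSub g H = L}

/-- The word length of an element of a free group (length of its reduced word). -/
def wordLength {n : ℕ} (w : FreeGroup (Fin n)) : ℕ := (FreeGroup.toWord w).length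

/-- `p` is a `(Z,r)`-vertex: there is `H ∈ Z` such that words of length at most `r`
move `p` exactly as they move the base coset of `Γ/H`. -/
def IsZRVertex {Γ : Type} [Group Γ] {n : ℕ} (γ : Fin n → Γ) (Z : Set (Subgroup Γ))
    {V : Type} (ρ : FreeGroup (Fin n) →* Equiv.Perm V) (r : ℕ) (p : V) : Prop :=
  ∃ H ∈ Z, ∀ w w' : FreeGroup (Fin n), wordLength w ≤ r → wordLength w' ≤ r →
    (ρ w p = ρ w' p ↔
      (QuotientGroup.mk (FreeGroup.lift γ w) : Γ ⧸ H) = QuotientGroup.mk (FreeGroup.lift γ w'))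

/-- A URS `Z` is sofic (w.r.t. the generating tuple `γ`): for every `r ≥ 1` and `ε > 0`
there is a finite nonempty free-group set in which at least a `(1-ε)` proportion of the
points are `(Z,r)`-vertices. -/
def IsSoficURS {Γ : Type} [Group Γ] {n : ℕ} (γ : Fin n → Γ) (Z : Set (Subgroup Γ)) : Prop :=
  ∀ r : ℕ, 1 ≤ r → ∀ ε : ℝ, 0 < ε →
    ∃ (V : Type) (_ : Fintype V) (_ : Nonempty V)
      (ρ : FreeGroup (Fin n) →* Equiv.Perm V),
      (1 - ε) * (Fintype.card V : ℝ) ≤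
        ({p : V | IsZRVertex γ Z ρ r p}.ncard : ℝ)

open Topology TopologicalSpace Filter Finset
open scoped ENNReal

lemma IsClopen.exists_finset_of_isInducing {X ι Y : Type*} [TopologicalSpace X] [CompactSpace X]
    [TopologicalSpace Y] [DiscreteTopology Y] {e : X → ι → Y} (he : IsInducing e) {C : Set X}
    (hC : IsClopen C) : ∃ A : Finset ι, ∀ x y, (∀ i ∈ A, e x i = e y i) → x ∈ C → y ∈ C := by
  let separated : Finset ι → Set (X × X) := fun A => ⋃ i ∈ A, {p | e p.1 i ≠ e p.2 i}
  have hcoord : ∀ i, Continuous fun x => e x i := fun i => (continuous_apply i).comp he.continuous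
  have hopen : ∀ A, IsOpen (separated A) := fun A =>
    isOpen_biUnion fun i _ => (isOpen_discrete {q : Y × Y | q.1 ≠ q.2}).preimage
      (((hcoord i).comp continuous_fst).prodMk ((hcoord i).comp continuous_snd))
  have hcover : C ×ˢ Cᶜ ⊆ ⋃ A, separated A := by
    rintro ⟨x, y⟩ ⟨hx, hy⟩
    have hne : e x ≠ e y := fun h =>
      hy ((he.inseparable_iff.mp (h ▸ .refl _)).mem_open_iff hC.isOpen |>.mp hx)
    obtain ⟨i, hi⟩ := Function.ne_iff.mp hne
    exact Set.mem_iUnion.mpr ⟨{i}, Set.mem_biUnion (Finset.mem_singleton_self i) hi⟩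
  have hmono : Monotone separated := fun A B hAB => Set.biUnion_mono hAB fun _ _ => le_rfl
  obtain ⟨A, hA⟩ := (hC.isClosed.isCompact.prod hC.compl.isClosed.isCompact).elim_directed_cover
    separated hopen hcover hmono.directed_le
  refine ⟨A, fun x y hxy hx => by_contra fun hy => ?_⟩
  obtain ⟨i, hi, hne⟩ := Set.mem_iUnion₂.mp (hA (Set.mk_mem_prod hx hy))
  exact hne (hxy i hi)

lemma mem_conjSub {Γ : Type*} [Group Γ] {g a : Γ} {H : Subgroup Γ} :
    a ∈ conjSub g H ↔ g⁻¹ * a * g ∈ H := by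
  simp only [conjSub, Subgroup.mem_map, MulEquiv.coe_toMonoidHom, MulAut.conj_apply]
  exact ⟨by rintro ⟨h, hh, rfl⟩; simpa [mul_assoc] using hh,
    fun h => ⟨g⁻¹ * a * g, h, by group⟩⟩

namespace Subgroup

variable {Γ : Type*} [Group Γ]

noncomputable def indicatorFun (H : Subgroup Γ) (a : Γ) : Bool :=
  @decide (a ∈ H) (Classical.dec _)

lemma indicatorFun_eq_true {H : Subgroup Γ} {a : Γ} : indicatorFun H a = true ↔ a ∈ H :=
  @decide_eq_true_iff _ (Classical.dec _)

lemma indicatorFun_eq_indicatorFun {H K : Subgroup Γ} {a : Γ} :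
    indicatorFun H a = indicatorFun K a ↔ (a ∈ H ↔ a ∈ K) := by
  rw [Bool.eq_iff_iff, indicatorFun_eq_true, indicatorFun_eq_true]

lemma isInducing_indicatorFun : IsInducing (indicatorFun (Γ := Γ)) := ⟨rfl⟩

lemma isEmbedding_indicatorFun : IsEmbedding (indicatorFun (Γ := Γ)) :=
  ⟨isInducing_indicatorFun, fun H K h => by
    ext a; exact indicatorFun_eq_indicatorFun.mp (congrFun h a)⟩

lemma continuous_indicatorFun_apply (a : Γ) : Continuous fun H : Subgroup Γ => indicatorFun H a :=
  (continuous_apply a).comp isInducing_indicatorFun.continuous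

lemma isClosed_range_indicatorFun : IsClosed (Set.range (indicatorFun (Γ := Γ))) := by
  have hrange : Set.range (indicatorFun (Γ := Γ)) = {f | f 1 = true} ∩
      ⋂ (a : Γ) (b : Γ), {f | f a = true → f b = true → f (a * b⁻¹) = true} := by
    ext f
    simp only [Set.mem_range, Set.mem_inter_iff, Set.mem_iInter, Set.mem_ofPred_eq]
    constructor
    · rintro ⟨H, rfl⟩
      simp only [indicatorFun_eq_true]
      exact ⟨H.one_mem, fun a b ha hb => H.mul_mem ha (H.inv_mem hb)⟩
    · rintro ⟨h1, hdiv⟩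
      refine ⟨ofDiv {a | f a = true} ⟨1, h1⟩ fun a ha b hb => hdiv a b ha hb, funext fun a => ?_⟩
      rw [Bool.eq_iff_iff, indicatorFun_eq_true]
      exact ⟨id, id⟩
  rw [hrange]
  refine ((isClosed_discrete {true}).preimage (continuous_apply (A := fun _ : Γ => Bool) 1)).inter
    (isClosed_iInter fun a => isClosed_iInter fun b => ?_)
  exact isClosed_discrete {t : Bool × Bool × Bool | t.1 = true → t.2.1 = true → t.2.2 = true}
    |>.preimage (by fun_prop : Continuous fun f : Γ → Bool => (f a, f b, f (a * b⁻¹)))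

instance : CompactSpace (Subgroup Γ) :=
  ⟨isInducing_indicatorFun.isCompact_iff.mpr <| by
    simpa only [Set.image_univ] using isClosed_range_indicatorFun.isCompact⟩

instance : T2Space (Subgroup Γ) := isEmbedding_indicatorFun.t2Space

instance : TotallyDisconnectedSpace (Subgroup Γ) :=
  isEmbedding_indicatorFun.isTotallyDisconnected_range.mp
    (isTotallyDisconnected_of_totallyDisconnectedSpace _)

instance [Countable Γ] : SecondCountableTopology (Subgroup Γ) :=
  isInducing_indicatorFun.secondCountableTopology

instance : BorelSpace (Subgroup Γ) := ⟨rfl⟩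

lemma continuous_conjSub (g : Γ) : Continuous (conjSub g : Subgroup Γ → Subgroup Γ) := by
  refine isInducing_indicatorFun.continuous_iff.mpr (continuous_pi fun a => ?_)
  have h : (fun H => indicatorFun (conjSub g H) a) = fun H => indicatorFun H (g⁻¹ * a * g) := by
    funext H
    rw [Bool.eq_iff_iff, indicatorFun_eq_true, indicatorFun_eq_true, mem_conjSub]
  simpa only [Function.comp_def, h] using continuous_indicatorFun_apply (g⁻¹ * a * g)

lemma exists_finset_of_isClopen {C : Set (Subgroup Γ)} (hC : IsClopen C) :
    ∃ A : Finset Γ, ∀ H K : Subgroup Γ, (∀ a ∈ A, a ∈ H ↔ a ∈ K) → H ∈ C → K ∈ C := by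
  obtain ⟨A, hA⟩ := hC.exists_finset_of_isInducing isInducing_indicatorFun
  exact ⟨A, fun H K hHK => hA H K fun a ha => indicatorFun_eq_indicatorFun.mpr (hHK a ha)⟩

end Subgroup

lemma Finset.card_filter_le_of_perm {V : Type*} [Fintype V] (σ : Equiv.Perm V)
    (P Q G : V → Prop) [DecidablePred P] [DecidablePred Q] [DecidablePred G]
    (h : ∀ p, G p → G (σ p) → P p → Q (σ p)) :
    #{p | P p} ≤ #{p | Q p} + 2 * #{p | ¬ G p} := by
  classical
  have hcover : ({p | P p} : Finset V) ⊆
      (({p | Q (σ p)} : Finset V) ∪ ({p | ¬ G p} : Finset V)) ∪ ({p | ¬ G (σ p)} : Finset V) := by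
    intro p
    simp only [Finset.mem_filter_univ, Finset.mem_union]
    tauto
  have hQ : #{p | Q (σ p)} = #{p | Q p} := Finset.card_equiv σ (by simp)
  have hG : #{p | ¬ G (σ p)} = #{p | ¬ G p} := Finset.card_equiv σ (by simp)
  calc #{p | P p} ≤ #{p | Q (σ p)} + #{p | ¬ G p} + #{p | ¬ G (σ p)} :=
        (Finset.card_le_card hcover).trans <| (Finset.card_union_le _ _).trans <|
          Nat.add_le_add_right (Finset.card_union_le _ _) _
    _ = #{p | Q p} + 2 * #{p | ¬ G p} := by rw [hQ, hG]; ring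

namespace MeasureTheory

section ClopenLimit

variable {X : Type*} [TopologicalSpace X] [CompactSpace X] [T2Space X] [TotallyDisconnectedSpace X]
  [SecondCountableTopology X] [MeasurableSpace X] [BorelSpace X]

lemma Measure.ext_of_isClopen {μ ν : Measure X} [IsFiniteMeasure μ]
    (h : ∀ C, IsClopen C → μ C = ν C) : μ = ν := by
  refine ext_of_generate_finite {s | IsClopen s} ?_ (fun s hs t ht _ => IsClopen.inter hs ht) h
    (h _ isClopen_univ)
  rw [BorelSpace.measurable_eq (α := X), isTopologicalBasis_isClopen.borel_eq_generateFrom]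

theorem exists_measurePreserving_of_tendsto_measureReal_preimage_sub {ι : Type*}
    {f : ι → X → X} (hf : ∀ i, Continuous (f i)) {Z : Set X} (hZ : IsClosed Z)
    (μs : ℕ → ProbabilityMeasure X) (hμsZ : ∀ k, (μs k : Measure X) Z = 1)
    (hinv : ∀ i C, IsClopen C →
      Tendsto (fun k => (μs k : Measure X).real (f i ⁻¹' C) - (μs k : Measure X).real C) atTop
        (𝓝 0)) :
    ∃ μ : Measure X, IsProbabilityMeasure μ ∧ μ Z = 1 ∧ ∀ i, MeasurePreserving (f i) μ μ := by
  obtain ⟨μ, -, hcluster⟩ := isCompact_univ.exists_mapClusterPt (f := atTop) (u := μs)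
    (tendsto_principal.mpr (by simp))
  obtain ⟨U, hU, hμ⟩ := mapClusterPt_iff_ultrafilter.mp hcluster
  have hμZ : (μ : Measure X) Z = 1 := by
    refine le_antisymm prob_le_one ?_
    have hlimsup := ProbabilityMeasure.limsup_measure_closed_le_of_tendsto hμ hZ
    simp only [hμsZ] at hlimsup
    simpa using hlimsup
  have hμC : ∀ i C, IsClopen C → μ (f i ⁻¹' C) = μ C := fun i C hC => by
    have hlim : ∀ S, IsClopen S → Tendsto (fun k => (μs k S : ℝ)) U (𝓝 (μ S)) := fun S hS =>
      (NNReal.continuous_coe.tendsto _).comp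
        (ProbabilityMeasure.tendsto_measure_of_isClopen_of_tendsto hμ hS)
    have hsub := tendsto_nhds_unique ((hlim _ (hC.preimage (hf i))).sub (hlim C hC))
      (by simpa only [ProbabilityMeasure.measureReal_eq_coe_coeFn] using
        (hinv i C hC).mono_left hU)
    exact NNReal.coe_injective (sub_eq_zero.mp hsub)
  refine ⟨μ, inferInstance, hμZ, fun i => ⟨(hf i).measurable, ?_⟩⟩
  refine Measure.ext_of_isClopen fun C hC => ?_
  rw [Measure.map_apply (hf i).measurable hC.isOpen.measurableSet]
  simpa using congrArg ((↑) : NNReal → ENNReal) (hμC i C hC)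

end ClopenLimit

section Empirical

variable {X V : Type*} [MeasurableSpace X] [Fintype V]

noncomputable def empiricalMeasure (Φ : V → X) : Measure X :=
  (Fintype.card V : ℝ≥0∞)⁻¹ • ∑ p, Measure.dirac (Φ p)

open scoped Classical in
lemma empiricalMeasure_real_apply (Φ : V → X) {S : Set X} (hS : MeasurableSet S) :
    (empiricalMeasure Φ).real S = #{p | Φ p ∈ S} / Fintype.card V := by
  simp [empiricalMeasure, measureReal_def, Measure.coe_finsetSum, Measure.dirac_apply' _ hS,
    Set.indicator_apply, Finset.sum_boole, inv_mul_eq_div]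

variable [Nonempty V]

instance (Φ : V → X) : IsProbabilityMeasure (empiricalMeasure Φ) :=
  ⟨by simpa [empiricalMeasure, Measure.coe_finsetSum] using
    ENNReal.inv_mul_cancel (by simp) (by simp)⟩

lemma empiricalMeasure_eq_one {Φ : V → X} {S : Set X} (hS : MeasurableSet S)
    (h : ∀ p, Φ p ∈ S) : empiricalMeasure Φ S = 1 :=
  (prob_compl_eq_zero_iff hS).mp <| by
    simp [empiricalMeasure, Measure.coe_finsetSum, Measure.dirac_apply' _ hS.compl, h]

lemma abs_empiricalMeasure_real_preimage_sub_le (Φ : V → X) (σ : Equiv.Perm V)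
    {f : X → X} (hf : Measurable f) {S : Set X} (hS : MeasurableSet S) {good : V → Prop}
    {ε : ℝ} (hgood : (1 - ε) * Fintype.card V ≤ {p | good p}.ncard)
    (h : ∀ p, good p → good (σ p) → (f (Φ p) ∈ S ↔ Φ (σ p) ∈ S)) :
    |(empiricalMeasure Φ).real (f ⁻¹' S) - (empiricalMeasure Φ).real S| ≤ 2 * ε := by
  classical
  have hforward : (#{p | f (Φ p) ∈ S} : ℝ) ≤ #{p | Φ p ∈ S} + 2 * #{p | ¬ good p} := by
    exact_mod_cast card_filter_le_of_perm σ _ _ good fun p hp hσp => (h p hp hσp).mp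
  have hbackward : (#{p | Φ p ∈ S} : ℝ) ≤ #{p | f (Φ p) ∈ S} + 2 * #{p | ¬ good p} := by
    exact_mod_cast card_filter_le_of_perm σ⁻¹ _ _ good
      fun p hp hσp => by simpa using (h _ hσp (by simpa using hp)).mpr
  have hsplit : (#{p | good p} : ℝ) + #{p | ¬ good p} = Fintype.card V := by
    exact_mod_cast Finset.card_filter_add_card_filter_not (s := Finset.univ) good
  rw [Set.ncard_eq_toFinset_card', Set.toFinset_ofPred] at hgood
  have hN : (0 : ℝ) < Fintype.card V := by exact_mod_cast Fintype.card_pos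
  rw [empiricalMeasure_real_apply Φ (hf hS), empiricalMeasure_real_apply Φ hS, div_sub_div_same,
    abs_div, abs_of_pos hN, div_le_iff₀ hN, abs_sub_le_iff]
  simp only [Set.mem_preimage]
  constructor <;> linarith

end Empirical

end MeasureTheory

section SchreierModel

variable {Γ : Type} [Group Γ] {n : ℕ} (γ : Fin n → Γ) {V : Type}
  (ρ : FreeGroup (Fin n) →* Equiv.Perm V)

lemma wordLength_one : wordLength (1 : FreeGroup (Fin n)) = 0 := by
  simp [wordLength]

lemma wordLength_mul_le (w w' : FreeGroup (Fin n)) :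
    wordLength (w * w') ≤ wordLength w + wordLength w' := by
  simpa [wordLength] using (FreeGroup.toWord_mul_sublist w w').length_le

/-- `IsZRVertex γ Z ρ r p` unfolds to `∃ H ∈ Z, IsSchreierModel γ ρ r p H`. -/
def IsSchreierModel (r : ℕ) (p : V) (H : Subgroup Γ) : Prop :=
  ∀ w w' : FreeGroup (Fin n), wordLength w ≤ r → wordLength w' ≤ r →
    (ρ w p = ρ w' p ↔
      (QuotientGroup.mk (FreeGroup.lift γ w) : Γ ⧸ H) = QuotientGroup.mk (FreeGroup.lift γ w'))

variable {γ ρ} {r : ℕ} {p : V} {H K : Subgroup Γ}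

lemma IsSchreierModel.apply_eq_self_iff (hp : IsSchreierModel γ ρ r p H)
    {w : FreeGroup (Fin n)} (hw : wordLength w ≤ r) : ρ w p = p ↔ FreeGroup.lift γ w ∈ H := by
  have h := hp w 1 hw (by simp [wordLength_one])
  rwa [map_one, map_one, Equiv.Perm.one_apply, QuotientGroup.eq, mul_one, inv_mem_iff] at h

lemma IsSchreierModel.mem_conjSub_iff (hp : IsSchreierModel γ ρ r p H) {u : FreeGroup (Fin n)}
    (hq : IsSchreierModel γ ρ r (ρ u p) K) {w : FreeGroup (Fin n)}
    (hlen : wordLength w + wordLength u ≤ r) :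
    FreeGroup.lift γ w ∈ conjSub (FreeGroup.lift γ u) H ↔ FreeGroup.lift γ w ∈ K := by
  rw [← hq.apply_eq_self_iff (by omega), ← Equiv.Perm.mul_apply, ← map_mul,
    hp _ _ ((wordLength_mul_le w u).trans hlen) (by omega), QuotientGroup.eq, mem_conjSub,
    map_mul, ← inv_mem_iff (x := _ * _)]
  group

end SchreierModel

section Sofic

variable {Γ : Type} [Group Γ] {n : ℕ} {γ : Fin n → Γ} {Z : Set (Subgroup Γ)}

lemma IsSoficURS.exists_labeling (hsofic : IsSoficURS γ Z) (hZ : Z.Nonempty) {r : ℕ}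
    (hr : 1 ≤ r) {ε : ℝ} (hε : 0 < ε) :
    ∃ (V : Type) (_ : Fintype V) (_ : Nonempty V) (ρ : FreeGroup (Fin n) →* Equiv.Perm V)
      (Φ : V → Subgroup Γ), (∀ p, Φ p ∈ Z) ∧
      (1 - ε) * (Fintype.card V : ℝ) ≤ {p | IsSchreierModel γ ρ r p (Φ p)}.ncard := by
  classical
  obtain ⟨V, hV, hne, ρ, hgood⟩ := hsofic r hr ε hε
  let Φ : V → Subgroup Γ := fun p => if h : IsZRVertex γ Z ρ r p then h.choose else hZ.some
  refine ⟨V, hV, hne, ρ, Φ, fun p => ?_, hgood.trans ?_⟩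
  · by_cases h : IsZRVertex γ Z ρ r p
    · simpa [Φ, h] using h.choose_spec.1
    · simpa [Φ, h] using hZ.some_mem
  · refine Nat.cast_le.mpr (Set.ncard_le_ncard (fun p h => ?_) (Set.toFinite _))
    have hp : IsZRVertex γ Z ρ r p := h
    simp only [Set.mem_ofPred_eq, Φ, dif_pos hp]
    exact hp.choose_spec.2

lemma abs_empiricalMeasure_real_conjSub_preimage_sub_le {V : Type} [Fintype V] [Nonempty V]
    {ρ : FreeGroup (Fin n) →* Equiv.Perm V} {Φ : V → Subgroup Γ} {r : ℕ} {ε : ℝ}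
    (hgood : (1 - ε) * (Fintype.card V : ℝ) ≤ {p | IsSchreierModel γ ρ r p (Φ p)}.ncard)
    {C : Set (Subgroup Γ)} (hC : MeasurableSet C) {A : Finset (FreeGroup (Fin n))}
    (hA : ∀ H K : Subgroup Γ,
      (∀ w ∈ A, FreeGroup.lift γ w ∈ H ↔ FreeGroup.lift γ w ∈ K) → H ∈ C → K ∈ C)
    (u : FreeGroup (Fin n)) (hlen : ∀ w ∈ A, wordLength w + wordLength u ≤ r) :
    |(empiricalMeasure Φ).real (conjSub (FreeGroup.lift γ u) ⁻¹' C) -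
      (empiricalMeasure Φ).real C| ≤ 2 * ε :=
  abs_empiricalMeasure_real_preimage_sub_le Φ (ρ u) (Subgroup.continuous_conjSub _).measurable hC
    hgood fun _ hp hq =>
      ⟨hA _ _ fun w hw => hp.mem_conjSub_iff hq (hlen w hw),
        hA _ _ fun w hw => (hp.mem_conjSub_iff hq (hlen w hw)).symm⟩

theorem IsSoficURS.exists_tendsto_measureReal_conjSub_preimage_sub
    (hsurj : Function.Surjective (FreeGroup.lift γ)) (hsofic : IsSoficURS γ Z)
    (hZ : Z.Nonempty) (hZm : MeasurableSet Z) :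
    ∃ μs : ℕ → ProbabilityMeasure (Subgroup Γ), (∀ k, (μs k : Measure (Subgroup Γ)) Z = 1) ∧
      ∀ g C, IsClopen C → Tendsto (fun k => (μs k : Measure (Subgroup Γ)).real (conjSub g ⁻¹' C) -
        (μs k : Measure (Subgroup Γ)).real C) atTop (𝓝 0) := by
  choose V hV hne ρ Φ hΦZ hgood using fun k : ℕ =>
    hsofic.exists_labeling hZ (r := k + 1) (by omega) (ε := 1 / (k + 1)) (by positivity)
  refine ⟨fun k => ⟨empiricalMeasure (Φ k), inferInstance⟩,
    fun k => empiricalMeasure_eq_one hZm (hΦZ k), fun g C hC => ?_⟩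
  obtain ⟨A, hA⟩ := Subgroup.exists_finset_of_isClopen hC
  obtain ⟨u, rfl⟩ := hsurj g
  choose word hword using hsurj
  have hA' : ∀ H K : Subgroup Γ, (∀ w ∈ A.image word,
      FreeGroup.lift γ w ∈ H ↔ FreeGroup.lift γ w ∈ K) → H ∈ C → K ∈ C := fun H K hHK =>
    hA H K fun a ha => by simpa [hword] using hHK (word a) (Finset.mem_image_of_mem word ha)
  have hbound : ∀ k ≥ (A.image word).sup wordLength + wordLength u,
      ‖(empiricalMeasure (Φ k)).real (conjSub (FreeGroup.lift γ u) ⁻¹' C) -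
        (empiricalMeasure (Φ k)).real C‖ ≤ 2 * (1 / ((k : ℝ) + 1)) := fun k hk =>
    abs_empiricalMeasure_real_conjSub_preimage_sub_le (hgood k) hC.isOpen.measurableSet hA' u
      fun w hw => by have := Finset.le_sup (f := wordLength) hw; omega
  refine squeeze_zero_norm' (eventually_atTop.mpr ⟨_, hbound⟩) ?_
  simpa using tendsto_one_div_add_atTop_nhds_zero_nat.const_mul (2 : ℝ)

end Sofic

theorem sofic_urs_has_invariant_measure_general
    {Γ : Type} [Group Γ] {n : ℕ} (γ : Fin n → Γ)
    (hgen : Subgroup.closure (Set.range γ) = ⊤)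
    (Z : Set (Subgroup Γ)) (hZ : IsURS Z) (hsofic : IsSoficURS γ Z) :
    ∃ μ : Measure (Subgroup Γ),
      IsProbabilityMeasure μ ∧ μ Z = 1 ∧
      ∀ g : Γ, MeasurePreserving (conjSub g) μ μ := by
  have hsurj := FreeGroup.lift_surjective_iff_closure_range_eq_top.mpr hgen
  have : Countable Γ := hsurj.countable
  obtain ⟨μs, hμsZ, hinv⟩ := hsofic.exists_tendsto_measureReal_conjSub_preimage_sub hsurj
    hZ.nonempty hZ.closed.measurableSet
  exact exists_measurePreserving_of_tendsto_measureReal_preimage_sub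
    Subgroup.continuous_conjSub hZ.closed μs hμsZ hinv

/-- a sofic URS of a finitely generated group carries a conjugation-invariant
Borel probability measure, i.e. an invariant random subgroup supported on `Z`. -/
theorem sofic_urs_has_invariant_measure
    {Γ : Type} [Group Γ] {n : ℕ} (γ : Fin n → Γ)
    (hgen : Subgroup.closure (Set.range γ) = ⊤)
    (hsym : ∀ i : Fin n, (γ i)⁻¹ ∈ Set.range γ)
    (Z : Set (Subgroup Γ)) (hZ : IsURS Z) (hsofic : IsSoficURS γ Z) :
    ∃ μ : Measure (Subgroup Γ),
      IsProbabilityMeasure μ ∧ μ Z = 1 ∧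
      ∀ g : Γ, MeasurePreserving (conjSub g) μ μ :=
  sofic_urs_has_invariant_measure_general γ hgen Z hZ hsofic
end

section
/- Let Γ be a finitely generated group with finite symmetric generating set Q, Z a uniformly recurrent subgroup of Γ, H, L ∈ Z, and R ≥ 0. Let K_H : Γ/H × Γ/H → ℂ and K_L : Γ/L × Γ/L → ℂ be local kernels of width ≤ R that are compatible: whenever the rooted-labeled R-balls around x ∈ Γ/H and y ∈ Γ/L are isomorphic, K_H(x, w·x) = K_L(y, w·y) for every word w over Q of length ≤ R. Then the bounded operators that K_H and K_L induce on ℓ²(Γ/H;ℂ) and ℓ²(Γ/L;ℂ) respectively have equal operator norms. -/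
/-- The Schreier graph of a subgroup `H ≤ Γ` with respect to a generating set `Q`:
vertices are left cosets in `Γ/H`, and `x ~ y` iff some `s ∈ Q` moves one to the other. -/
def schreierGraph {Γ : Type*} [Group Γ] (Q : Finset Γ) (H : Subgroup Γ) :
    SimpleGraph (Γ ⧸ H) where
  Adj x y := x ≠ y ∧ ∃ s ∈ Q, s • x = y ∨ s • y = x
  symm := by
    constructor
    rintro x y ⟨hne, s, hs, h⟩
    exact ⟨hne.symm, s, hs, h.symm⟩
  loopless := by constructor; rintro x ⟨hne, _⟩; exact hne rfl

/-- The `R`-ball around `x` in the Schreier graph of `H`. -/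
def sBall {Γ : Type*} [Group Γ] (Q : Finset Γ) (H : Subgroup Γ) (R : ℕ) (x : Γ ⧸ H) :
    Set (Γ ⧸ H) :=
  {y | (schreierGraph Q H).Reachable x y ∧ (schreierGraph Q H).dist x y ≤ R}

/-- The rooted-labeled `R`-balls around `x ∈ Γ/H` and `y ∈ Γ/H'` are isomorphic:
there is a root-preserving bijection between them commuting with all generator labels. -/
def BallIso {Γ : Type*} [Group Γ] (Q : Finset Γ) (H H' : Subgroup Γ) (R : ℕ)
    (x : Γ ⧸ H) (y : Γ ⧸ H') : Prop :=
  ∃ φ : (Γ ⧸ H) → (Γ ⧸ H'),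
    Set.BijOn φ (sBall Q H R x) (sBall Q H' R y) ∧ φ x = y ∧
    ∀ s ∈ Q, ∀ u ∈ sBall Q H R x, ∀ v ∈ sBall Q H R x, (s • u = v ↔ s • φ u = φ v)

/-- The set of elements of `Γ` expressible as a product of at most `R` generators
from `Q` (words over `Q` of length at most `R`). -/
def WordLe {Γ : Type*} [Group Γ] (Q : Finset Γ) (R : ℕ) : Set Γ :=
  {g : Γ | ∃ l : List Γ, (∀ s ∈ l, s ∈ Q) ∧ l.length ≤ R ∧ l.prod = g}

/-- `K` is a local kernel of width at most `R` on the Schreier graph of `H`: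
it vanishes outside distance `R` and only depends on the rooted-labeled `R`-ball. -/
def IsLocalKernel {Γ : Type*} [Group Γ] (Q : Finset Γ) (H : Subgroup Γ) (R : ℕ)
    (K : (Γ ⧸ H) → (Γ ⧸ H) → ℂ) : Prop :=
  (∀ x y : Γ ⧸ H, y ∉ sBall Q H R x → K x y = 0) ∧
  (∀ x x' : Γ ⧸ H, BallIso Q H H R x x' →
    ∀ w ∈ WordLe Q R, K x (w • x) = K x' (w • x'))

open Function

section Words

variable {Γ : Type*} [Group Γ] {Q : Finset Γ}

theorem one_mem_wordLe (R : ℕ) : (1 : Γ) ∈ WordLe Q R :=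
  ⟨[], by simp, by simp, by simp⟩

theorem mem_wordLe_one {s : Γ} (hs : s ∈ Q) : s ∈ WordLe Q 1 :=
  ⟨[s], by simpa using hs, by simp, by simp⟩

theorem wordLe_mono : Monotone (WordLe Q) := by
  rintro R R' h g ⟨l, hl, hlen, rfl⟩
  exact ⟨l, hl, hlen.trans h, rfl⟩

theorem mul_mem_wordLe {a b : Γ} {m n : ℕ} (ha : a ∈ WordLe Q m) (hb : b ∈ WordLe Q n) :
    a * b ∈ WordLe Q (m + n) := by
  obtain ⟨l, hl, hlen, rfl⟩ := ha
  obtain ⟨l', hl', hlen', rfl⟩ := hb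
  refine ⟨l ++ l', ?_, by simpa using Nat.add_le_add hlen hlen', List.prod_append⟩
  simpa [or_imp, forall_and] using And.intro hl hl'

theorem inv_mem_wordLe (hsym : ∀ s ∈ Q, s⁻¹ ∈ Q) {a : Γ} {m : ℕ} (ha : a ∈ WordLe Q m) :
    a⁻¹ ∈ WordLe Q m := by
  obtain ⟨l, hl, hlen, rfl⟩ := ha
  refine ⟨(l.map (·⁻¹)).reverse, ?_, by simpa using hlen, ?_⟩
  · simpa using fun s hs => by simpa using hsym _ (hl _ hs)
  · simp [List.prod_reverse_noncomm]

theorem wordLe_finite (Q : Finset Γ) (R : ℕ) : (WordLe Q R).Finite := by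
  refine ((List.finite_length_le Q R).image fun l => (l.map (↑)).prod).subset ?_
  rintro g ⟨l, hl, hlen, rfl⟩
  lift l to List Q using hl
  exact ⟨l, by simpa using hlen, rfl⟩

theorem exists_mem_wordLe (hgen : Subgroup.closure (Q : Set Γ) = ⊤)
    (hsym : ∀ s ∈ Q, s⁻¹ ∈ Q) (g : Γ) : ∃ n, g ∈ WordLe Q n := by
  have hg : g ∈ Submonoid.closure ((Q : Set Γ) ∪ (Q : Set Γ)⁻¹) := by
    rw [← Subgroup.closure_toSubmonoid, hgen]; trivial
  obtain ⟨l, hl, rfl⟩ := Submonoid.exists_list_of_mem_closure hg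
  refine ⟨l.length, l, fun s hs => ?_, le_rfl, rfl⟩
  rcases hl s hs with h | h
  · exact h
  · simpa using hsym _ h

end Words

section Balls

variable {Γ : Type*} [Group Γ] {Q : Finset Γ} {H : Subgroup Γ}

theorem exists_mem_wordLe_smul_eq_of_walk (hsym : ∀ s ∈ Q, s⁻¹ ∈ Q) {x y : Γ ⧸ H}
    (p : (schreierGraph Q H).Walk x y) : ∃ w ∈ WordLe Q p.length, w • x = y := by
  induction p with
  | nil => exact ⟨1, one_mem_wordLe 0, one_smul _ _⟩
  | @cons x z y hxz p ih =>
    obtain ⟨w, hw, rfl⟩ := ih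
    obtain ⟨-, s, hs, hsx | hsz⟩ := hxz
    · exact ⟨w * s, mul_mem_wordLe hw (mem_wordLe_one hs), by rw [mul_smul, hsx]⟩
    · refine ⟨w * s⁻¹, mul_mem_wordLe hw (mem_wordLe_one (hsym s hs)), ?_⟩
      rw [mul_smul, ← hsz, inv_smul_smul]

theorem exists_walk_list_prod_smul {x : Γ ⧸ H} (l : List Γ) (hl : ∀ s ∈ l, s ∈ Q) :
    ∃ p : (schreierGraph Q H).Walk x (l.prod • x), p.length ≤ l.length := by
  induction l with
  | nil => exact ⟨SimpleGraph.Walk.nil.copy rfl (one_smul _ x).symm, by simp⟩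
  | cons s l ih =>
    obtain ⟨p, hp⟩ := ih fun t ht => hl t (List.mem_cons_of_mem _ ht)
    rw [List.prod_cons, mul_smul]
    by_cases hfix : s • l.prod • x = l.prod • x
    · exact ⟨p.copy rfl hfix.symm, by simpa using hp.trans (Nat.le_succ _)⟩
    · have hadj : (schreierGraph Q H).Adj (l.prod • x) (s • l.prod • x) :=
        ⟨Ne.symm hfix, s, hl s List.mem_cons_self, Or.inl rfl⟩
      exact ⟨p.concat hadj, by simpa using hp⟩

theorem mem_sBall_iff (hsym : ∀ s ∈ Q, s⁻¹ ∈ Q) {R : ℕ} {x y : Γ ⧸ H} :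
    y ∈ sBall Q H R x ↔ ∃ w ∈ WordLe Q R, w • x = y := by
  constructor
  · rintro ⟨hxy, hdist⟩
    obtain ⟨p, hp⟩ := hxy.exists_walk_length_eq_dist
    obtain ⟨w, hw, hwx⟩ := exists_mem_wordLe_smul_eq_of_walk hsym p
    exact ⟨w, wordLe_mono (hp ▸ hdist) hw, hwx⟩
  · rintro ⟨w, ⟨l, hl, hlen, rfl⟩, rfl⟩
    obtain ⟨p, hp⟩ := exists_walk_list_prod_smul (x := x) l hl
    exact ⟨p.reachable, (SimpleGraph.dist_le p).trans (hp.trans hlen)⟩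

theorem smul_mem_sBall (hsym : ∀ s ∈ Q, s⁻¹ ∈ Q) {R : ℕ} (x : Γ ⧸ H) {w : Γ}
    (hw : w ∈ WordLe Q R) : w • x ∈ sBall Q H R x :=
  (mem_sBall_iff hsym).2 ⟨w, hw, rfl⟩

theorem self_mem_sBall (R : ℕ) (x : Γ ⧸ H) : x ∈ sBall Q H R x :=
  ⟨.refl x, by simp⟩

theorem sBall_mono {R R' : ℕ} (h : R ≤ R') (x : Γ ⧸ H) : sBall Q H R x ⊆ sBall Q H R' x :=
  fun _ hy => ⟨hy.1, hy.2.trans h⟩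

theorem mem_sBall_trans (hsym : ∀ s ∈ Q, s⁻¹ ∈ Q) {a b : ℕ} {x u v : Γ ⧸ H}
    (hu : u ∈ sBall Q H a x) (hv : v ∈ sBall Q H b u) : v ∈ sBall Q H (a + b) x := by
  obtain ⟨w, hw, rfl⟩ := (mem_sBall_iff hsym).1 hu
  obtain ⟨w', hw', rfl⟩ := (mem_sBall_iff hsym).1 hv
  rw [smul_smul, add_comm]
  exact smul_mem_sBall hsym x (mul_mem_wordLe hw' hw)

theorem mem_sBall_comm (hsym : ∀ s ∈ Q, s⁻¹ ∈ Q) {R : ℕ} {x y : Γ ⧸ H} :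
    y ∈ sBall Q H R x ↔ x ∈ sBall Q H R y := by
  suffices ∀ {x y : Γ ⧸ H}, y ∈ sBall Q H R x → x ∈ sBall Q H R y from ⟨this, this⟩
  intro x y h
  obtain ⟨w, hw, rfl⟩ := (mem_sBall_iff hsym).1 h
  simpa using smul_mem_sBall hsym (w • x) (inv_mem_wordLe hsym hw)

theorem sBall_finite (hsym : ∀ s ∈ Q, s⁻¹ ∈ Q) (R : ℕ) (x : Γ ⧸ H) :
    (sBall Q H R x).Finite := by
  refine ((wordLe_finite Q R).image (· • x)).subset fun y hy => ?_
  obtain ⟨w, hw, rfl⟩ := (mem_sBall_iff hsym).1 hy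
  exact ⟨w, hw, rfl⟩

theorem exists_subset_sBall (hgen : Subgroup.closure (Q : Set Γ) = ⊤)
    (hsym : ∀ s ∈ Q, s⁻¹ ∈ Q) {S : Set (Γ ⧸ H)} (hS : S.Finite) (x : Γ ⧸ H) :
    ∃ R, S ⊆ sBall Q H R x := by
  suffices ∀ᶠ R in Filter.atTop, ∀ u ∈ S, u ∈ sBall Q H R x from this.exists
  refine (Filter.eventually_all_finite hS).2 fun u _ => ?_
  obtain ⟨γ, rfl⟩ := QuotientGroup.mk_surjective u
  obtain ⟨δ, rfl⟩ := QuotientGroup.mk_surjective x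
  obtain ⟨n, hn⟩ := exists_mem_wordLe hgen hsym (γ * δ⁻¹)
  refine Filter.eventually_atTop.2 ⟨n, fun R hR => sBall_mono hR _ ?_⟩
  simpa [MulAction.Quotient.smul_mk] using smul_mem_sBall hsym (δ : Γ ⧸ H) hn

end Balls

section BallIsos

variable {Γ : Type*} [Group Γ]

def IsBallIso (Q : Finset Γ) (H H' : Subgroup Γ) (R : ℕ) (φ : Γ ⧸ H → Γ ⧸ H') (x : Γ ⧸ H)
    (y : Γ ⧸ H') : Prop :=
  Set.BijOn φ (sBall Q H R x) (sBall Q H' R y) ∧ φ x = y ∧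
    ∀ s ∈ Q, ∀ u ∈ sBall Q H R x, ∀ v ∈ sBall Q H R x, (s • u = v ↔ s • φ u = φ v)

variable {Q : Finset Γ} {H H' : Subgroup Γ} {ρ : ℕ} {φ : Γ ⧸ H → Γ ⧸ H'} {x : Γ ⧸ H}
  {y : Γ ⧸ H'}

theorem IsBallIso.map_list_prod_smul (hsym : ∀ s ∈ Q, s⁻¹ ∈ Q) (hφ : IsBallIso Q H H' ρ φ x y)
    {a : ℕ} {u : Γ ⧸ H} (hu : u ∈ sBall Q H a x) (l : List Γ) (hl : ∀ s ∈ l, s ∈ Q)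
    (hal : a + l.length ≤ ρ) : φ (l.prod • u) = l.prod • φ u := by
  induction l with
  | nil => simp
  | cons s l ih =>
    simp only [List.length_cons] at hal
    have hl' : ∀ t ∈ l, t ∈ Q := fun t ht => hl t (List.mem_cons_of_mem _ ht)
    have hs : s ∈ Q := hl s List.mem_cons_self
    have hlu : l.prod • u ∈ sBall Q H (a + l.length) x :=
      mem_sBall_trans hsym hu (smul_mem_sBall hsym u ⟨l, hl', le_rfl, rfl⟩)
    have hslu : s • l.prod • u ∈ sBall Q H (a + l.length + 1) x :=
      mem_sBall_trans hsym hlu (smul_mem_sBall hsym _ (mem_wordLe_one hs))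
    rw [List.prod_cons, mul_smul, mul_smul, ← ih hl' (by omega)]
    exact ((hφ.2.2 s hs _ (sBall_mono (by omega) x hlu) _ (sBall_mono hal x hslu)).1 rfl).symm

theorem IsBallIso.map_smul (hsym : ∀ s ∈ Q, s⁻¹ ∈ Q) (hφ : IsBallIso Q H H' ρ φ x y)
    {a b : ℕ} {u : Γ ⧸ H} (hu : u ∈ sBall Q H a x) {w : Γ} (hw : w ∈ WordLe Q b)
    (hab : a + b ≤ ρ) : φ (w • u) = w • φ u := by
  obtain ⟨l, hl, hlen, rfl⟩ := hw
  exact hφ.map_list_prod_smul hsym hu l hl (by omega)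

theorem IsBallIso.restrict (hsym : ∀ s ∈ Q, s⁻¹ ∈ Q) (hφ : IsBallIso Q H H' ρ φ x y)
    {a b : ℕ} {u : Γ ⧸ H} (hu : u ∈ sBall Q H a x) (hab : a + b ≤ ρ) :
    IsBallIso Q H H' b φ u (φ u) := by
  have hsub : sBall Q H b u ⊆ sBall Q H ρ x :=
    fun v hv => sBall_mono hab x (mem_sBall_trans hsym hu hv)
  have himage : ∀ w ∈ WordLe Q b, φ (w • u) = w • φ u := fun w hw => hφ.map_smul hsym hu hw hab
  refine ⟨⟨?_, hφ.1.injOn.mono hsub, ?_⟩, rfl,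
    fun s hs v hv v' hv' => hφ.2.2 s hs v (hsub hv) v' (hsub hv')⟩
  · intro v hv
    obtain ⟨w, hw, rfl⟩ := (mem_sBall_iff hsym).1 hv
    rw [himage w hw]
    exact smul_mem_sBall hsym _ hw
  · intro v' hv'
    obtain ⟨w, hw, rfl⟩ := (mem_sBall_iff hsym).1 hv'
    exact ⟨w • u, smul_mem_sBall hsym u hw, himage w hw⟩

theorem IsBallIso.mono (hsym : ∀ s ∈ Q, s⁻¹ ∈ Q) (hφ : IsBallIso Q H H' ρ φ x y) {b : ℕ}
    (hb : b ≤ ρ) : IsBallIso Q H H' b φ x y := by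
  simpa only [hφ.2.1] using hφ.restrict hsym (self_mem_sBall 0 x) (by omega : 0 + b ≤ ρ)

theorem BallIso.symm {R : ℕ} (h : BallIso Q H H' R x y) : BallIso Q H' H R y x := by
  obtain ⟨φ, hbij, hroot, hlabel⟩ := h
  have hinv := hbij.invOn_invFunOn
  have hbij' := hbij.symm hinv.symm
  refine ⟨Function.invFunOn φ (sBall Q H R x), hbij', ?_, fun s hs u hu v hv => ?_⟩
  · rw [← hroot]; exact hinv.1 (self_mem_sBall R x)
  · have := hlabel s hs _ (hbij'.mapsTo hu) _ (hbij'.mapsTo hv)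
    rwa [hinv.2 hu, hinv.2 hv, iff_comm] at this

theorem exists_isBallIso_of_smul_eq_iff (hsym : ∀ s ∈ Q, s⁻¹ ∈ Q) {R : ℕ}
    (h : ∀ w ∈ WordLe Q (R + 1), ∀ w' ∈ WordLe Q R, (w • x = w' • x ↔ w • y = w' • y)) :
    ∃ φ, IsBallIso Q H H' R φ x y := by
  classical
  -- send `w • x` to `w • y` for a chosen word `w`; `h` makes this independent of the choice
  let φ : Γ ⧸ H → Γ ⧸ H' := fun u =>
    if hu : ∃ w ∈ WordLe Q R, w • x = u then hu.choose • y else y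
  have hφ : ∀ w ∈ WordLe Q R, φ (w • x) = w • y := by
    intro w hw
    have hex : ∃ w' ∈ WordLe Q R, w' • x = w • x := ⟨w, hw, rfl⟩
    simp only [φ, dif_pos hex]
    exact (h _ (wordLe_mono (Nat.le_succ R) hex.choose_spec.1) w hw).1 hex.choose_spec.2
  have hR : WordLe Q R ⊆ WordLe Q (R + 1) := wordLe_mono (Nat.le_succ R)
  refine ⟨φ, ⟨?_, ?_, ?_⟩, by simpa using hφ 1 (one_mem_wordLe R), ?_⟩
  · intro u hu
    obtain ⟨w, hw, rfl⟩ := (mem_sBall_iff hsym).1 hu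
    rw [hφ w hw]
    exact smul_mem_sBall hsym y hw
  · intro u hu u' hu' huu'
    obtain ⟨w, hw, rfl⟩ := (mem_sBall_iff hsym).1 hu
    obtain ⟨w', hw', rfl⟩ := (mem_sBall_iff hsym).1 hu'
    rw [hφ w hw, hφ w' hw'] at huu'
    exact (h w (hR hw) w' hw').2 huu'
  · intro v hv
    obtain ⟨w, hw, rfl⟩ := (mem_sBall_iff hsym).1 hv
    exact ⟨w • x, smul_mem_sBall hsym x hw, hφ w hw⟩
  · intro s hs u hu u' hu'
    obtain ⟨w, hw, rfl⟩ := (mem_sBall_iff hsym).1 hu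
    obtain ⟨w', hw', rfl⟩ := (mem_sBall_iff hsym).1 hu'
    rw [hφ w hw, hφ w' hw', smul_smul, smul_smul]
    exact h _ (by simpa [add_comm] using mul_mem_wordLe (mem_wordLe_one hs) hw) w' hw'

end BallIsos

section URS

variable {Γ : Type*} [Group Γ] {Q : Finset Γ}

theorem mem_conjSub_iff {g γ : Γ} {H : Subgroup Γ} : γ ∈ conjSub g H ↔ g⁻¹ * γ * g ∈ H := by
  simp only [conjSub, Subgroup.mem_map, MulEquiv.coe_toMonoidHom, MulAut.conj_apply]
  constructor
  · rintro ⟨h, hh, rfl⟩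
    simpa [mul_assoc] using hh
  · exact fun hγ => ⟨_, hγ, by group⟩

theorem smul_mk_eq_smul_mk_iff {H : Subgroup Γ} (g w w' : Γ) :
    w • (g : Γ ⧸ H) = w' • (g : Γ ⧸ H) ↔ w⁻¹ * w' ∈ conjSub g H := by
  rw [MulAction.Quotient.smul_mk, MulAction.Quotient.smul_mk, QuotientGroup.eq, mem_conjSub_iff]
  simp [mul_assoc]

theorem IsURS.exists_conjSub_agree {Z : Set (Subgroup Γ)} (hZ : IsURS Z) {L A : Subgroup Γ}
    (hL : L ∈ Z) (hA : A ∈ Z) {S : Set Γ} (hS : S.Finite) :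
    ∃ g : Γ, ∀ γ ∈ S, γ ∈ conjSub g L ↔ γ ∈ A := by
  let χ : Subgroup Γ → Γ → Bool := fun B γ => @decide (γ ∈ B) (Classical.dec _)
  have hclosure : χ A ∈ closure (χ '' {B | ∃ g, conjSub g L = B}) :=
    closure_induced.1 (hZ.minimal L hL A hA)
  -- the functions agreeing with `χ A` on the finite set `S` form an open neighbourhood of `χ A`
  obtain ⟨_, hagree, _, ⟨g, rfl⟩, rfl⟩ := mem_closure_iff.1 hclosure (S.pi fun γ => {χ A γ})
    (isOpen_set_pi hS fun _ _ => isOpen_discrete _) fun _ _ => rfl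
  exact ⟨g, fun γ hγ => decide_eq_decide.1 (hagree γ hγ)⟩

theorem IsURS.exists_isBallIso (hsym : ∀ s ∈ Q, s⁻¹ ∈ Q) {Z : Set (Subgroup Γ)} (hZ : IsURS Z)
    {H L : Subgroup Γ} (hH : H ∈ Z) (hL : L ∈ Z) (x : Γ ⧸ H) (R : ℕ) :
    ∃ y : Γ ⧸ L, ∃ φ, IsBallIso Q H L R φ x y := by
  obtain ⟨γ, rfl⟩ := QuotientGroup.mk_surjective x
  obtain ⟨g, hg⟩ := hZ.exists_conjSub_agree hL (hZ.invariant γ H hH) (wordLe_finite Q (2 * R + 1))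
  refine ⟨g, exists_isBallIso_of_smul_eq_iff hsym fun w hw w' hw' => ?_⟩
  rw [smul_mk_eq_smul_mk_iff, smul_mk_eq_smul_mk_iff]
  refine (hg _ ?_).symm
  simpa [two_mul, add_right_comm] using mul_mem_wordLe (inv_mem_wordLe hsym hw) hw'

end URS

section LpSpaces

variable {ι κ : Type*}

theorem tsum_eq_tsum_of_injOn {α : Type*} [AddCommMonoid α] [TopologicalSpace α] {f : ι → α}
    {g : κ → α} {e : ι → κ} {s : Set ι} (he : s.InjOn e) (hf : support f ⊆ s)
    (hg : support g ⊆ e '' s) (hfg : ∀ i ∈ s, g (e i) = f i) : ∑' j, g j = ∑' i, f i := by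
  rw [← tsum_subtype_eq_of_support_subset hf, ← tsum_subtype_eq_of_support_subset hg,
    tsum_image g he]
  exact tsum_congr fun i => hfg i i.2

open scoped ENNReal

variable {E : Type*} [NormedAddCommGroup E] {p : ℝ≥0∞}

theorem lp.norm_eq_of_injOn (hp : 0 < p.toReal) {f : lp (fun _ : ι => E) p}
    {g : lp (fun _ : κ => E) p} {e : ι → κ} {s : Set ι} (he : s.InjOn e) (hf : support ⇑f ⊆ s)
    (hg : support ⇑g ⊆ e '' s) (hfg : ∀ i ∈ s, g (e i) = f i) : ‖g‖ = ‖f‖ := by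
  have hf' : (support fun i => ‖f i‖ ^ p.toReal) ⊆ s :=
    fun i hi => hf fun hzero => hi (by simp [hzero, Real.zero_rpow hp.ne'])
  have hg' : (support fun j => ‖g j‖ ^ p.toReal) ⊆ e '' s :=
    fun j hj => hg fun hzero => hj (by simp [hzero, Real.zero_rpow hp.ne'])
  rw [lp.norm_eq_tsum_rpow hp, lp.norm_eq_tsum_rpow hp,
    tsum_eq_tsum_of_injOn he hf' hg' fun i hi => by rw [hfg i hi]]

theorem lp.exists_apply_comp_eq_of_injOn (e : ι → κ) {s : Set ι} (hs : s.Finite)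
    (he : s.InjOn e) (f : ι → E) :
    ∃ g : lp (fun _ : κ => E) p, support ⇑g ⊆ e '' s ∧ ∀ i ∈ s, g (e i) = f i := by
  let g : κ → E := extend (s.domRestrict e) (s.domRestrict f) 0
  have hsupp : support g ⊆ e '' s := by
    intro j hj
    by_contra hjs
    exact hj (extend_apply' _ _ j fun ⟨i, hi⟩ => hjs ⟨i, i.2, hi⟩)
  have hg : Memℓp g p := (memℓp_zero ((hs.image e).subset hsupp)).of_exponent_ge zero_le
  exact ⟨⟨g, hg⟩, hsupp, fun i hi => (Set.injOn_iff_injective.1 he).extend_apply _ _ ⟨i, hi⟩⟩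

theorem lp.opNorm_le_of_forall_finite_support {𝕜 F : Type*} [NontriviallyNormedField 𝕜]
    [NormedSpace 𝕜 E] [SeminormedAddCommGroup F] [NormedSpace 𝕜 F] [Fact (1 ≤ p)]
    (hp : p ≠ ∞) (T : lp (fun _ : ι => E) p →L[𝕜] F) {C : ℝ} (hC : 0 ≤ C)
    (hT : ∀ f : lp (fun _ : ι => E) p, (support ⇑f).Finite → ‖T f‖ ≤ C * ‖f‖) : ‖T‖ ≤ C := by
  classical
  refine T.opNorm_le_bound hC fun f => ?_
  have hsum := lp.hasSum_single hp f
  refine le_of_tendsto_of_tendsto' (T.continuous.tendsto f |>.comp hsum).norm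
    (hsum.norm.const_mul C) fun S => hT _ (S.finite_toSet.subset fun j hj => ?_)
  by_contra hjS
  refine hj ?_
  rw [lp.coeFn_sum, Finset.sum_apply]
  exact Finset.sum_eq_zero fun i hi => lp.single_apply_ne p i _ (ne_of_mem_of_not_mem hi hjS).symm

end LpSpaces

section Kernels

variable {Γ : Type*} [Group Γ] {Q : Finset Γ} {H L : Subgroup Γ} {R : ℕ}
  {K_H : Γ ⧸ H → Γ ⧸ H → ℂ} {K_L : Γ ⧸ L → Γ ⧸ L → ℂ}

theorem support_tsum_kernel_mul_subset (hsym : ∀ s ∈ Q, s⁻¹ ∈ Q)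
    (hK : ∀ x y : Γ ⧸ H, y ∉ sBall Q H R x → K_H x y = 0) {f : Γ ⧸ H → ℂ} {a : ℕ}
    {x : Γ ⧸ H} (hf : support f ⊆ sBall Q H a x) :
    (support fun u => ∑' v, K_H u v * f v) ⊆ sBall Q H (a + R) x := by
  intro u hu
  by_contra hux
  refine hu ((tsum_congr fun v => ?_).trans tsum_zero)
  by_cases hv : f v = 0
  · rw [hv, mul_zero]
  · rw [hK u v fun hvu => hux (mem_sBall_trans hsym (hf hv) ((mem_sBall_comm hsym).1 hvu)),
      zero_mul]

variable {ρ : ℕ} {φ : Γ ⧸ H → Γ ⧸ L} {x : Γ ⧸ H} {y : Γ ⧸ L}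

theorem IsBallIso.kernel_eq (hsym : ∀ s ∈ Q, s⁻¹ ∈ Q)
    (hKH : ∀ x y : Γ ⧸ H, y ∉ sBall Q H R x → K_H x y = 0)
    (hKL : ∀ x y : Γ ⧸ L, y ∉ sBall Q L R x → K_L x y = 0)
    (hcompat : ∀ (x : Γ ⧸ H) (y : Γ ⧸ L), BallIso Q H L R x y →
      ∀ w ∈ WordLe Q R, K_H x (w • x) = K_L y (w • y))
    (hφ : IsBallIso Q H L ρ φ x y) {a : ℕ} {u v : Γ ⧸ H} (hu : u ∈ sBall Q H a x)
    (haR : a + R ≤ ρ) (hv : v ∈ sBall Q H ρ x) : K_H u v = K_L (φ u) (φ v) := by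
  by_cases huv : v ∈ sBall Q H R u
  · obtain ⟨w, hw, rfl⟩ := (mem_sBall_iff hsym).1 huv
    rw [hφ.map_smul hsym hu hw haR]
    exact hcompat u (φ u) ⟨φ, hφ.restrict hsym hu haR⟩ w hw
  · refine (hKH u v huv).trans (hKL _ _ fun hφv => huv ?_).symm
    obtain ⟨w, hw, hwφ⟩ := (mem_sBall_iff hsym).1 hφv
    have hwu : w • u ∈ sBall Q H ρ x :=
      sBall_mono haR x (mem_sBall_trans hsym hu (smul_mem_sBall hsym u hw))
    rw [← hφ.map_smul hsym hu hw haR] at hwφ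
    rw [← hφ.1.injOn hwu hv hwφ]
    exact smul_mem_sBall hsym u hw

theorem IsBallIso.tsum_kernel_mul_eq (hsym : ∀ s ∈ Q, s⁻¹ ∈ Q)
    (hKH : ∀ x y : Γ ⧸ H, y ∉ sBall Q H R x → K_H x y = 0)
    (hKL : ∀ x y : Γ ⧸ L, y ∉ sBall Q L R x → K_L x y = 0)
    (hcompat : ∀ (x : Γ ⧸ H) (y : Γ ⧸ L), BallIso Q H L R x y →
      ∀ w ∈ WordLe Q R, K_H x (w • x) = K_L y (w • y))
    (hφ : IsBallIso Q H L ρ φ x y) {a b : ℕ} (ha : a ≤ ρ) {f : Γ ⧸ H → ℂ} {g : Γ ⧸ L → ℂ}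
    (hf : support f ⊆ sBall Q H a x) (hg : support g ⊆ φ '' sBall Q H a x)
    (hfg : ∀ v ∈ sBall Q H a x, g (φ v) = f v) {u : Γ ⧸ H} (hu : u ∈ sBall Q H b x)
    (hbR : b + R ≤ ρ) : ∑' w, K_L (φ u) w * g w = ∑' v, K_H u v * f v :=
  tsum_eq_tsum_of_injOn (hφ.1.injOn.mono (sBall_mono ha x))
    ((support_mul_subset_right _ _).trans hf) ((support_mul_subset_right _ _).trans hg)
    fun v hv => by
      rw [hfg v hv, hφ.kernel_eq hsym hKH hKL hcompat hu hbR (sBall_mono ha x hv)]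

end Kernels

section Operators

open scoped ENNReal

variable {Γ : Type*} [Group Γ] {Q : Finset Γ} {H L : Subgroup Γ} {R : ℕ}
  {K_H : Γ ⧸ H → Γ ⧸ H → ℂ} {K_L : Γ ⧸ L → Γ ⧸ L → ℂ} {p : ℝ≥0∞} [Fact (1 ≤ p)]

theorem norm_apply_le_of_compatible (hp : p ≠ ∞) (hgen : Subgroup.closure (Q : Set Γ) = ⊤)
    (hsym : ∀ s ∈ Q, s⁻¹ ∈ Q)
    (hKH : ∀ x y : Γ ⧸ H, y ∉ sBall Q H R x → K_H x y = 0)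
    (hKL : ∀ x y : Γ ⧸ L, y ∉ sBall Q L R x → K_L x y = 0)
    (hcompat : ∀ (x : Γ ⧸ H) (y : Γ ⧸ L), BallIso Q H L R x y →
      ∀ w ∈ WordLe Q R, K_H x (w • x) = K_L y (w • y))
    (hiso : ∀ (x : Γ ⧸ H) (ρ : ℕ), ∃ y : Γ ⧸ L, ∃ φ, IsBallIso Q H L ρ φ x y)
    (T_H : lp (fun _ : Γ ⧸ H => ℂ) p →L[ℂ] lp (fun _ : Γ ⧸ H => ℂ) p)
    (T_L : lp (fun _ : Γ ⧸ L => ℂ) p →L[ℂ] lp (fun _ : Γ ⧸ L => ℂ) p)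
    (hTH : ∀ f x, T_H f x = ∑' y, K_H x y * f y) (hTL : ∀ f x, T_L f x = ∑' y, K_L x y * f y)
    (F : lp (fun _ : Γ ⧸ H => ℂ) p) (hF : (support ⇑F).Finite) : ‖T_H F‖ ≤ ‖T_L‖ * ‖F‖ := by
  have hp' : 0 < p.toReal := ENNReal.toReal_pos (one_pos.trans_le Fact.out).ne' hp
  let x₀ : Γ ⧸ H := (1 : Γ)
  obtain ⟨R₀, hFR₀⟩ := exists_subset_sBall hgen hsym hF x₀
  obtain ⟨y₀, φ, hφ⟩ := hiso x₀ (R₀ + R + R)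
  have hinj : (sBall Q H (R₀ + R) x₀).InjOn φ := hφ.1.injOn.mono (sBall_mono (by omega) x₀)
  obtain ⟨G, hGφ, hGF⟩ := lp.exists_apply_comp_eq_of_injOn (p := p) φ (sBall_finite hsym R₀ x₀)
    (hinj.mono (sBall_mono (by omega) x₀)) F
  have hG : support ⇑G ⊆ sBall Q L R₀ y₀ :=
    hGφ.trans ((hφ.mono hsym (by omega)).1.mapsTo.image_subset)
  have hnormG : ‖G‖ = ‖F‖ :=
    lp.norm_eq_of_injOn hp' (hinj.mono (sBall_mono (by omega) x₀)) hFR₀ hGφ hGF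
  have hnormT : ‖T_L G‖ = ‖T_H F‖ := by
    refine lp.norm_eq_of_injOn hp' hinj ?_ ?_ fun u hu => ?_
    · rw [show ⇑(T_H F) = _ from funext (hTH F)]
      exact support_tsum_kernel_mul_subset hsym hKH hFR₀
    · rw [show ⇑(T_L G) = _ from funext (hTL G)]
      exact (support_tsum_kernel_mul_subset hsym hKL hG).trans
        (hφ.mono hsym (by omega)).1.surjOn
    · rw [hTL, hTH]
      exact hφ.tsum_kernel_mul_eq hsym hKH hKL hcompat (by omega) hFR₀ hGφ hGF hu le_rfl
  calc ‖T_H F‖ = ‖T_L G‖ := hnormT.symm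
    _ ≤ ‖T_L‖ * ‖G‖ := T_L.le_opNorm G
    _ = ‖T_L‖ * ‖F‖ := by rw [hnormG]

theorem opNorm_le_of_compatible (hp : p ≠ ∞) (hgen : Subgroup.closure (Q : Set Γ) = ⊤)
    (hsym : ∀ s ∈ Q, s⁻¹ ∈ Q)
    (hKH : ∀ x y : Γ ⧸ H, y ∉ sBall Q H R x → K_H x y = 0)
    (hKL : ∀ x y : Γ ⧸ L, y ∉ sBall Q L R x → K_L x y = 0)
    (hcompat : ∀ (x : Γ ⧸ H) (y : Γ ⧸ L), BallIso Q H L R x y →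
      ∀ w ∈ WordLe Q R, K_H x (w • x) = K_L y (w • y))
    (hiso : ∀ (x : Γ ⧸ H) (ρ : ℕ), ∃ y : Γ ⧸ L, ∃ φ, IsBallIso Q H L ρ φ x y)
    (T_H : lp (fun _ : Γ ⧸ H => ℂ) p →L[ℂ] lp (fun _ : Γ ⧸ H => ℂ) p)
    (T_L : lp (fun _ : Γ ⧸ L => ℂ) p →L[ℂ] lp (fun _ : Γ ⧸ L => ℂ) p)
    (hTH : ∀ f x, T_H f x = ∑' y, K_H x y * f y) (hTL : ∀ f x, T_L f x = ∑' y, K_L x y * f y) :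
    ‖T_H‖ ≤ ‖T_L‖ :=
  lp.opNorm_le_of_forall_finite_support hp T_H (norm_nonneg _) fun F hF =>
    norm_apply_le_of_compatible hp hgen hsym hKH hKL hcompat hiso T_H T_L hTH hTL F hF

end Operators

/-- compatible local kernels over two members of a URS induce bounded
operators of equal norm. -/
theorem compatible_local_kernels_have_equal_operator_norm
    {Γ : Type*} [Group Γ] (Q : Finset Γ)
    (hgen : Subgroup.closure (Q : Set Γ) = ⊤)
    (hsym : ∀ s ∈ Q, s⁻¹ ∈ Q)
    (Z : Set (Subgroup Γ)) (hZ : IsURS Z)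
    (H L : Subgroup Γ) (hH : H ∈ Z) (hL : L ∈ Z) (R : ℕ)
    (K_H : (Γ ⧸ H) → (Γ ⧸ H) → ℂ) (K_L : (Γ ⧸ L) → (Γ ⧸ L) → ℂ)
    (hKH : IsLocalKernel Q H R K_H) (hKL : IsLocalKernel Q L R K_L)
    (hcompat : ∀ (x : Γ ⧸ H) (y : Γ ⧸ L), BallIso Q H L R x y →
      ∀ w ∈ WordLe Q R, K_H x (w • x) = K_L y (w • y))
    (T_H : lp (fun _ : Γ ⧸ H => ℂ) 2 →L[ℂ] lp (fun _ : Γ ⧸ H => ℂ) 2)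
    (T_L : lp (fun _ : Γ ⧸ L => ℂ) 2 →L[ℂ] lp (fun _ : Γ ⧸ L => ℂ) 2)
    (hTH : ∀ (f : lp (fun _ : Γ ⧸ H => ℂ) 2) (x : Γ ⧸ H),
      (T_H f : (Γ ⧸ H) → ℂ) x = ∑' y : Γ ⧸ H, K_H x y * (f : (Γ ⧸ H) → ℂ) y)
    (hTL : ∀ (f : lp (fun _ : Γ ⧸ L => ℂ) 2) (x : Γ ⧸ L),
      (T_L f : (Γ ⧸ L) → ℂ) x = ∑' y : Γ ⧸ L, K_L x y * (f : (Γ ⧸ L) → ℂ) y) :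
    ‖T_H‖ = ‖T_L‖ := by
  have hcompat' : ∀ (y : Γ ⧸ L) (x : Γ ⧸ H), BallIso Q L H R y x →
      ∀ w ∈ WordLe Q R, K_L y (w • y) = K_H x (w • x) :=
    fun y x hyx w hw => (hcompat x y hyx.symm w hw).symm
  exact le_antisymm
    (opNorm_le_of_compatible ENNReal.ofNat_ne_top hgen hsym hKH.1 hKL.1 hcompat
      (hZ.exists_isBallIso hsym hH hL) T_H T_L hTH hTL)
    (opNorm_le_of_compatible ENNReal.ofNat_ne_top hgen hsym hKL.1 hKH.1 hcompat'
      (hZ.exists_isBallIso hsym hL hH) T_L T_H hTL hTH)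
end
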